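/- Two relative Rota-Baxter operators $T_1, T_2:V\to\mathfrak{L}$ are compatible (i.e., every linear combination $\lambda T_1 + \eta T_2$ is a relative Rota-Baxter operator) if and only if for all $u,v,w\in V$ and $\{i,j\}=\{1,2\}$: $\{T_iu,T_iv,T_jw\}+\{T_iu,T_jv,T_iw\}+\{T_ju,T_iv,T_iw\} = T_i(l(T_iu,T_jv)w+m(T_iu,T_jw)v+r(T_iv,T_jw)u) + T_i(l(T_ju,T_iv)w+m(T_ju,T_iw)v+r(T_jv,T_iw)u) + T_j(l(T_iu,T_iv)w+m(T_iu,T_iw)v+r(T_iv,T_iw)u)$. -/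

import Mathlib

/-!
For `S = λ T₁ + η T₂` the defect `{Su, Sv, Sw} - S (l(Su,Sv)w + m(Su,Sw)v + r(Sv,Sw)u)` is a cubic
form in `(λ, η)`: its `λ³` and `η³` coefficients are the defects of `T₁` and `T₂`, and its `λ²η` and
`λη²` coefficients are the defects of the two mixed identities. So once `T₁`, `T₂` are relative
Rota-Baxter operators, compatibility says `λ²η x + λη² y = 0` for all `λ, η`, and evaluating at
`(1, 1)` and `(1, -1)` gives `x = y = 0`.

The one subtle point is the quadratic dependence of `l(Au,Bv)w + m(Au,Bw)v + r(Av,Bw)u` on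
`(A, B)`. The representation axioms only make the sum `l x y w + m x z v + r y z u` trilinear in
the pairs `(x,u), (y,v), (z,w)`, not `l`, `m`, `r` separately, so this expression need not be
bilinear in `(A, B)`. Its diagonal and its symmetrisation nevertheless agree with those of the
bilinear form `rrbArgBilin`: the correction terms, such as `l x 0 0 + m x 0 0`, are values of the
trilinear map at points with two zero arguments up to constants, and the constants sum to its value
at zero.
-/

def IsTrilin (K : Type*) [Field K] {L M : Type*} [AddCommGroup L] [Module K L]
    [AddCommGroup M] [Module K M] (t : L → L → L → M) : Prop :=
  (∀ y z, IsLinearMap K fun x => t x y z) ∧ (∀ x z, IsLinearMap K fun y => t x y z) ∧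
    (∀ x y, IsLinearMap K fun z => t x y z)

def LTSIdent {L : Type*} [AddCommGroup L] (t : L → L → L → L) : Prop :=
  (∀ a b c d e, t a b (t c d e) =
      t (t a b c) d e - t (t a b d) c e - t (t a b e) c d + t (t a b e) d c) ∧
  (∀ a b c d e, t a (t b c d) e =
      t (t a b c) d e - t (t a c b) d e - t (t a d b) c e + t (t a d c) b e)

def IsLTS (K : Type*) [Field K] {L : Type*} [AddCommGroup L] [Module K L]
    (t : L → L → L → L) : Prop := IsTrilin K t ∧ LTSIdent t

def sd {L V : Type*} [AddCommGroup L] [AddCommGroup V]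
    (t : L → L → L → L) (l m r : L → L → V → V) :
    L × V → L × V → L × V → L × V :=
  fun p q s => (t p.1 q.1 s.1, l p.1 q.1 s.2 + m p.1 s.1 q.2 + r q.1 s.1 p.2)

def IsRep (K : Type*) [Field K] {L V : Type*} [AddCommGroup L] [Module K L]
    [AddCommGroup V] [Module K V] (t : L → L → L → L) (l m r : L → L → V → V) : Prop :=
  IsLTS K (sd t l m r)

def IsRRB {K : Type*} [Field K] {L V : Type*} [AddCommGroup L] [Module K L]
    [AddCommGroup V] [Module K V] (t : L → L → L → L) (l m r : L → L → V → V)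
    (T : V →ₗ[K] L) : Prop :=
  ∀ u v w, t (T u) (T v) (T w) =
    T (l (T u) (T v) w + m (T u) (T w) v + r (T v) (T w) u)

def IsRB {K : Type*} [Field K] {L : Type*} [AddCommGroup L] [Module K L]
    (t : L → L → L → L) (R : L →ₗ[K] L) : Prop :=
  ∀ x y z, t (R x) (R y) (R z) =
    R (t (R x) (R y) z + t (R x) y (R z) + t x (R y) (R z))

def IsNij {K : Type*} [Field K] {A : Type*} [AddCommGroup A] [Module K A]
    (t : A → A → A → A) (N : A →ₗ[K] A) : Prop :=
  ∀ x y z, t (N x) (N y) (N z) =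
    N (t (N x) (N y) z) + N (t x (N y) (N z)) + N (t (N x) y (N z))
      - N (N (t (N x) y z)) - N (N (t x (N y) z)) - N (N (t x y (N z)))
      + N (N (N (t x y z)))

def Mixed {K : Type*} [Field K] {L V : Type*} [AddCommGroup L] [Module K L]
    [AddCommGroup V] [Module K V]
    (t : L → L → L → L) (l m r : L → L → V → V) (A B : V →ₗ[K] L) : Prop :=
  ∀ u v w, t (A u) (A v) (B w) + t (A u) (B v) (A w) + t (B u) (A v) (A w) =
    A (l (A u) (B v) w + m (A u) (B w) v + r (A v) (B w) u)
      + A (l (B u) (A v) w + m (B u) (A w) v + r (B v) (A w) u)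
      + B (l (A u) (A v) w + m (A u) (A w) v + r (A v) (A w) u)


def IsTrilin.toLinearMap₃ {K : Type*} [Field K] {L M : Type*} [AddCommGroup L] [Module K L]
    [AddCommGroup M] [Module K M] {t : L → L → L → M} (h : IsTrilin K t) :
    L →ₗ[K] L →ₗ[K] L →ₗ[K] M where
  toFun x := LinearMap.mk₂ K (t x) (fun y y' z => (h.2.1 x z).map_add y y')
    (fun c y z => (h.2.1 x z).map_smul c y) (fun y z z' => (h.2.2 x y).map_add z z')
    (fun c y z => (h.2.2 x y).map_smul c z)
  map_add' x x' := by ext y z; exact (h.1 y z).map_add x x'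
  map_smul' c x := by ext y z; exact (h.1 y z).map_smul c x

@[simp]
theorem IsTrilin.toLinearMap₃_apply {K : Type*} [Field K] {L M : Type*} [AddCommGroup L]
    [Module K L] [AddCommGroup M] [Module K M] {t : L → L → L → M} (h : IsTrilin K t)
    (x y z : L) : h.toLinearMap₃ x y z = t x y z :=
  rfl

theorem eq_zero_and_eq_zero_of_forall_smul_add_smul {K M : Type*} [Field K] [NeZero (2 : K)]
    [AddCommGroup M] [Module K M] {x y : M}
    (h : ∀ a b : K, (a ^ 2 * b) • x + (a * b ^ 2) • y = 0) : x = 0 ∧ y = 0 := by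
  have hsum : x + y = 0 := by simpa using h 1 1
  have hdiff : -x + y = 0 := by simpa using h 1 (-1)
  have hy : (2 : K) • y = 0 := by linear_combination (norm := module) hsum + hdiff
  have hy : y = 0 := (smul_eq_zero.mp hy).resolve_left two_ne_zero
  exact ⟨by simpa [hy] using hsum, hy⟩

section RelativeRotaBaxter

variable {K : Type*} [Field K] {L V : Type*} [AddCommGroup L] [Module K L]
  [AddCommGroup V] [Module K V]

def sdSnd (l m r : L → L → V → V) (p q s : L × V) : V :=
  l p.1 q.1 s.2 + m p.1 s.1 q.2 + r q.1 s.1 p.2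

def rrbArg (l m r : L → L → V → V) (A B : V →ₗ[K] L) (u v w : V) : V :=
  l (A u) (B v) w + m (A u) (B w) v + r (A v) (B w) u

def rrbArgBilin (Φ : L × V →ₗ[K] L × V →ₗ[K] L × V →ₗ[K] V) (A B : V →ₗ[K] L)
    (u v w : V) : V :=
  Φ (LinearMap.inl K L V (A u)) (LinearMap.inl K L V (B v)) (LinearMap.inr K L V w)
    + Φ (LinearMap.inl K L V (A u)) (LinearMap.inr K L V v) (LinearMap.inl K L V (B w))
    + Φ (LinearMap.inr K L V u) (LinearMap.inl K L V (A v)) (LinearMap.inl K L V (B w))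

theorem rrbArgBilin_smul_add_smul (Φ : L × V →ₗ[K] L × V →ₗ[K] L × V →ₗ[K] V)
    (A B : V →ₗ[K] L) (a b : K) (u v w : V) :
    rrbArgBilin Φ (a • A + b • B) (a • A + b • B) u v w =
      a ^ 2 • rrbArgBilin Φ A A u v w
        + (a * b) • (rrbArgBilin Φ A B u v w + rrbArgBilin Φ B A u v w)
        + b ^ 2 • rrbArgBilin Φ B B u v w := by
  simp only [rrbArgBilin, LinearMap.add_apply, LinearMap.smul_apply, map_add, map_smul]
  module

variable {t : L → L → L → L} {l m r : L → L → V → V}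

theorem IsRep.isTrilin_sdSnd (h : IsRep K t l m r) : IsTrilin K (sdSnd l m r) :=
  have ⟨⟨h₁, h₂, h₃⟩, _⟩ := h
  ⟨fun q s => ((LinearMap.snd K L V).comp (IsLinearMap.mk' _ (h₁ q s))).isLinear,
    fun p s => ((LinearMap.snd K L V).comp (IsLinearMap.mk' _ (h₂ p s))).isLinear,
    fun p q => ((LinearMap.snd K L V).comp (IsLinearMap.mk' _ (h₃ p q))).isLinear⟩

theorem IsTrilin.sdSnd_degenerate_sum_eq_zero (hQ : IsTrilin K (sdSnd l m r)) (x y z : L) :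
    (l x 0 0 + m x 0 0) + (l 0 y 0 + r y 0 0) + (m 0 z 0 + r 0 z 0) = 0 := by
  have h₁ := (hQ.2.1 (x, 0) 0).map_zero
  have h₂ := (hQ.1 (y, 0) 0).map_zero
  have h₃ := (hQ.1 0 (z, 0)).map_zero
  have h₀ := (hQ.1 0 0).map_zero
  simp only [sdSnd, Prod.fst_zero, Prod.snd_zero] at h₀ h₁ h₂ h₃
  linear_combination (norm := module) h₁ + h₂ + h₃ - h₀

theorem IsTrilin.rrbArg_self (hQ : IsTrilin K (sdSnd l m r)) (A : V →ₗ[K] L) (u v w : V) :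
    rrbArg l m r A A u v w = rrbArgBilin hQ.toLinearMap₃ A A u v w := by
  simp only [rrbArg, rrbArgBilin, IsTrilin.toLinearMap₃_apply, sdSnd, LinearMap.inl_apply,
    LinearMap.inr_apply]
  linear_combination (norm := module) -hQ.sdSnd_degenerate_sum_eq_zero (A u) (A v) (A w)

theorem IsTrilin.rrbArg_add_rrbArg_swap (hQ : IsTrilin K (sdSnd l m r)) (A B : V →ₗ[K] L)
    (u v w : V) :
    rrbArg l m r A B u v w + rrbArg l m r B A u v w =
      rrbArgBilin hQ.toLinearMap₃ A B u v w + rrbArgBilin hQ.toLinearMap₃ B A u v w := by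
  simp only [rrbArg, rrbArgBilin, IsTrilin.toLinearMap₃_apply, sdSnd, LinearMap.inl_apply,
    LinearMap.inr_apply]
  linear_combination (norm := module) -hQ.sdSnd_degenerate_sum_eq_zero (A u) (A v) (A w)
    - hQ.sdSnd_degenerate_sum_eq_zero (B u) (B v) (B w)

theorem IsTrilin.rrbArg_smul_add_smul (hQ : IsTrilin K (sdSnd l m r)) (A B : V →ₗ[K] L)
    (a b : K) (u v w : V) :
    rrbArg l m r (a • A + b • B) (a • A + b • B) u v w =
      a ^ 2 • rrbArg l m r A A u v w
        + (a * b) • (rrbArg l m r A B u v w + rrbArg l m r B A u v w)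
        + b ^ 2 • rrbArg l m r B B u v w := by
  rw [hQ.rrbArg_self, rrbArgBilin_smul_add_smul, hQ.rrbArg_add_rrbArg_swap, hQ.rrbArg_self,
    hQ.rrbArg_self]

variable (t l m r)

def rrbDefect (T : V →ₗ[K] L) (u v w : V) : L :=
  t (T u) (T v) (T w) - T (rrbArg l m r T T u v w)

def mixedDefect (A B : V →ₗ[K] L) (u v w : V) : L :=
  t (A u) (A v) (B w) + t (A u) (B v) (A w) + t (B u) (A v) (A w)
    - (A (rrbArg l m r A B u v w) + A (rrbArg l m r B A u v w) + B (rrbArg l m r A A u v w))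

theorem isRRB_iff_rrbDefect_eq_zero (T : V →ₗ[K] L) :
    IsRRB t l m r T ↔ ∀ u v w, rrbDefect t l m r T u v w = 0 := by
  simp only [IsRRB, rrbDefect, rrbArg, sub_eq_zero]

theorem mixed_iff_mixedDefect_eq_zero (A B : V →ₗ[K] L) :
    Mixed t l m r A B ↔ ∀ u v w, mixedDefect t l m r A B u v w = 0 := by
  simp only [Mixed, mixedDefect, rrbArg, sub_eq_zero]

variable {t l m r}

theorem rrbDefect_smul_add_smul (ht : IsTrilin K t) (hQ : IsTrilin K (sdSnd l m r))
    (A B : V →ₗ[K] L) (a b : K) (u v w : V) :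
    rrbDefect t l m r (a • A + b • B) u v w =
      a ^ 3 • rrbDefect t l m r A u v w + (a ^ 2 * b) • mixedDefect t l m r A B u v w
        + (a * b ^ 2) • mixedDefect t l m r B A u v w + b ^ 3 • rrbDefect t l m r B u v w := by
  simp only [rrbDefect, mixedDefect, hQ.rrbArg_smul_add_smul, ← ht.toLinearMap₃_apply,
    LinearMap.add_apply, LinearMap.smul_apply, map_add, map_smul]
  module

end RelativeRotaBaxter

theorem stmt6 {K : Type*} [Field K] [CharZero K] {L V : Type*} [AddCommGroup L]
    [Module K L] [AddCommGroup V] [Module K V]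
    (t : L → L → L → L) (l m r : L → L → V → V)
    (hL : IsLTS K t) (hrep : IsRep K t l m r)
    (T₁ T₂ : V →ₗ[K] L) (hT₁ : IsRRB t l m r T₁) (hT₂ : IsRRB t l m r T₂) :
    (∀ lam eta : K, IsRRB t l m r (lam • T₁ + eta • T₂)) ↔
      (Mixed t l m r T₁ T₂ ∧ Mixed t l m r T₂ T₁) := by
  rw [isRRB_iff_rrbDefect_eq_zero] at hT₁ hT₂
  have hdefect : ∀ (a b : K) (u v w : V), rrbDefect t l m r (a • T₁ + b • T₂) u v w =
      (a ^ 2 * b) • mixedDefect t l m r T₁ T₂ u v w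
        + (a * b ^ 2) • mixedDefect t l m r T₂ T₁ u v w :=
    fun a b u v w => by
      rw [rrbDefect_smul_add_smul hL.1 hrep.isTrilin_sdSnd, hT₁, hT₂, smul_zero, smul_zero,
        zero_add, add_zero]
  simp only [isRRB_iff_rrbDefect_eq_zero, mixed_iff_mixedDefect_eq_zero, hdefect]
  constructor
  · intro h
    exact ⟨fun u v w => (eq_zero_and_eq_zero_of_forall_smul_add_smul (h · · u v w)).1,
      fun u v w => (eq_zero_and_eq_zero_of_forall_smul_add_smul (h · · u v w)).2⟩
  · rintro ⟨h₁₂, h₂₁⟩ a b u v w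
    rw [h₁₂, h₂₁, smul_zero, smul_zero, add_zero]
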